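/- Let Γ be a finite simple graph. If two acyclic orientations O^1, O^2 of Γ satisfy ν_C(O^1) = ν_C(O^2) for every cycle C in Γ, then O^1 and O^2 are click-equivalent. Consequently, the collection of values (ν_C)_C over all cycles C is a complete invariant of click-equivalence classes of acyclic orientations. -/

import Mathlib

variable {V : Type*}

/-- An acyclic orientation of a simple graph `G`. -/
structure AcyclicOrientation (G : SimpleGraph V) where
  dir : V → V → Prop
  dir_adj : ∀ {a b : V}, dir a b → G.Adj a b
  total : ∀ {a b : V}, G.Adj a b → dir a b ∨ dir b a
  acyclic : ∀ a : V, ¬ Relation.TransGen dir a a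

namespace AcyclicOrientation

variable {G : SimpleGraph V}

/-- `v` is a source: no edge points into `v`. -/
def IsSource (O : AcyclicOrientation G) (v : V) : Prop := ∀ a, ¬ O.dir a v

/-- `O'` is obtained from `O` by converting the source `v` into a sink. -/
def ClickAt (O : AcyclicOrientation G) (v : V) (O' : AcyclicOrientation G) : Prop :=
  O.IsSource v ∧ ∀ a b, (O'.dir a b ↔ (((a = v ∨ b = v) ∧ O.dir b a) ∨ (a ≠ v ∧ b ≠ v ∧ O.dir a b)))

/-- One source-to-sink conversion relates `O` and `O'`. -/
def IsClick (O O' : AcyclicOrientation G) : Prop := ∃ v, O.ClickAt v O'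

/-- Click-equivalence: reachability by a finite sequence of clicks. -/
def ClickEquiv (O O' : AcyclicOrientation G) : Prop :=
  Relation.ReflTransGen IsClick O O'

/-- `ClickSeq O c O'` : the list `c` is a click-sequence applicable to `O` with result `O'`. -/
inductive ClickSeq : AcyclicOrientation G → List V → AcyclicOrientation G → Prop
  | nil (O : AcyclicOrientation G) : ClickSeq O [] O
  | cons {O O' O'' : AcyclicOrientation G} {v : V} {c : List V} :
      O.ClickAt v O' → ClickSeq O' c O'' → ClickSeq O (v :: c) O''

open scoped Classical in
/-- `ν_P(O)`: forward minus backward edges of the closed walk `p` under `O`. -/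
noncomputable def nu (O : AcyclicOrientation G) {u : V} (p : G.Walk u u) : ℤ :=
  (p.darts.map (fun d => if O.dir d.toProd.1 d.toProd.2 then (1 : ℤ) else -1)).sum

/-- The `vw`-interval: vertices on a directed path from `v` to `w`. -/
def interval (O : AcyclicOrientation G) (v w : V) : Set V :=
  {a | Relation.ReflTransGen O.dir v a ∧ Relation.ReflTransGen O.dir a w}

end AcyclicOrientation

open AcyclicOrientation

/-- The setoid of click-equivalence (equivalence relation generated by clicks). -/
def clickSetoid (G : SimpleGraph V) : Setoid (AcyclicOrientation G) :=
  ⟨Relation.EqvGen IsClick, Relation.EqvGen.is_equivalence _⟩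

/-- `κ(G)`: the number of click-equivalence classes of acyclic orientations. -/
noncomputable def kappa (G : SimpleGraph V) : ℕ :=
  Nat.card (Quotient (clickSetoid G))

/-- The graph obtained from `G` by contracting the vertex set `I` to the single vertex `vI ∈ I`
(vertices of `I` other than `vI` become isolated). -/
def contractGraph (G : SimpleGraph V) (I : Set V) (vI : V) : SimpleGraph V where
  Adj a b := a ≠ b ∧
    ((a ∉ I ∧ b ∉ I ∧ G.Adj a b) ∨
     (a = vI ∧ b ∉ I ∧ ∃ x ∈ I, G.Adj x b) ∨
     (b = vI ∧ a ∉ I ∧ ∃ x ∈ I, G.Adj x a))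
  symm := by
    constructor
    rintro a b ⟨hne, h⟩
    refine ⟨hne.symm, ?_⟩
    rcases h with ⟨ha, hb, hadj⟩ | ⟨ha, hb, x, hx, hadj⟩ | ⟨hb, ha, x, hx, hadj⟩
    · exact Or.inl ⟨hb, ha, hadj.symm⟩
    · exact Or.inr (Or.inr ⟨ha, hb, x, hx, hadj⟩)
    · exact Or.inr (Or.inl ⟨hb, ha, x, hx, hadj⟩)
  loopless := by constructor; rintro a ⟨hne, -⟩; exact hne rfl

/-- The orientation of the contracted graph induced by an orientation `O` of `G`. -/
def contractDir {G : SimpleGraph V} (O : AcyclicOrientation G) (I : Set V) (vI : V) :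
    V → V → Prop := fun a b =>
  (a ∉ I ∧ b ∉ I ∧ O.dir a b) ∨
  (a = vI ∧ b ∉ I ∧ ∃ x ∈ I, O.dir x b) ∨
  (b = vI ∧ a ∉ I ∧ ∃ x ∈ I, O.dir a x)

/-- The orientation `i → j` iff `i` precedes `j` in the list `l`. -/
def permDir (G : SimpleGraph V) [DecidableEq V] (l : List V) : V → V → Prop :=
  fun i j => G.Adj i j ∧ l.idxOf i < l.idxOf j

/-! The reversal weight of a dart, `+1` if `O₁` orients it forward and `O₂` backward, `-1` in the
opposite situation and `0` otherwise, is half the difference of the `ν`-weights of `O₁` and `O₂`.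
It is antisymmetric and, by hypothesis, sums to zero over every cycle; shortcutting a closed walk
with `bypass` splits it into cycles and backtracks, so it sums to zero over every closed walk and
is therefore the coboundary of a potential `φ : V → ℤ`, which grows by one along exactly the
`O₁`-edges that `O₂` reverses. If `φ` is not constant, the vertices below `max φ` are closed under
`O₁`-predecessors, so they contain a source of `O₁`; clicking it raises `φ` there by one and keeps
it a potential, so `∑ (max φ - φ)` decreases. A constant potential forces `O₁ = O₂`. -/

namespace SimpleGraph.Walk

variable {G : SimpleGraph V} {A : Type*} [AddCommGroup A] {f : G.Dart → A}

theorem sum_map_darts_reverse (hf : ∀ d, f d.symm = -f d) {u v : V} (p : G.Walk u v) :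
    (p.reverse.darts.map f).sum = -(p.darts.map f).sum := by
  induction p with
  | nil => simp
  | @cons a b _ h p ih =>
    simp only [reverse_cons, darts_append, darts_cons, darts_nil, List.map_append, List.map_cons,
      List.map_nil, List.sum_append, List.sum_cons, List.sum_nil, ih]
    rw [show f ⟨(b, a), h.symm⟩ = -f ⟨(a, b), h⟩ from hf ⟨(a, b), h⟩]
    abel

theorem sum_map_darts_cons_eq_zero_of_isPath (hf : ∀ d, f d.symm = -f d)
    (hcyc : ∀ (u : V) (c : G.Walk u u), c.IsCycle → (c.darts.map f).sum = 0)
    {u x : V} (h : G.Adj u x) {q : G.Walk x u} (hq : q.IsPath) :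
    f ⟨(u, x), h⟩ + (q.darts.map f).sum = 0 := by
  by_cases he : s(u, x) ∈ q.edges
  · cases q with
    | nil => exact absurd rfl h.ne
    | cons h' r =>
      rw [cons_isPath_iff] at hq
      rcases List.mem_cons.1 he with he | he
      · rcases Sym2.eq_iff.1 he with ⟨rfl, -⟩ | ⟨rfl, -⟩
        · exact (G.irrefl h).elim
        rw [(isPath_iff_nil.1 hq.1).eq_nil, darts_cons, darts_nil, List.map_singleton,
          List.sum_singleton, show f ⟨(x, u), h'⟩ = -f ⟨(u, x), h⟩ from hf ⟨(u, x), h⟩,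
          add_neg_cancel]
      · exact absurd (r.snd_mem_support_of_mem_edges he) hq.2
  · simpa using hcyc u _ ((cons_isCycle_iff q h).2 ⟨hq, he⟩)

theorem sum_map_darts_bypass [DecidableEq V] (hf : ∀ d, f d.symm = -f d)
    (hcyc : ∀ (u : V) (c : G.Walk u u), c.IsCycle → (c.darts.map f).sum = 0)
    {u v : V} (p : G.Walk u v) :
    (p.bypass.darts.map f).sum = (p.darts.map f).sum := by
  induction p with
  | nil => rfl
  | cons h p ih =>
    simp only [bypass]
    split_ifs with hs
    · have hsplit := congrArg (fun q => (q.darts.map f).sum) (p.bypass.take_spec hs)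
      simp only [darts_append, List.map_append, List.sum_append] at hsplit
      have hclose := sum_map_darts_cons_eq_zero_of_isPath hf hcyc h (p.bypass_isPath.takeUntil hs)
      rw [darts_cons, List.map_cons, List.sum_cons, ← ih, ← hsplit, ← add_assoc, hclose,
        zero_add]
    · simp [ih]

theorem sum_map_darts_eq_zero_of_forall_isCycle (hf : ∀ d, f d.symm = -f d)
    (hcyc : ∀ (u : V) (c : G.Walk u u), c.IsCycle → (c.darts.map f).sum = 0)
    {u : V} (p : G.Walk u u) :
    (p.darts.map f).sum = 0 := by
  classical
  rw [← sum_map_darts_bypass hf hcyc, (isPath_iff_nil.1 p.bypass_isPath).eq_nil]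
  rfl

end SimpleGraph.Walk

namespace SimpleGraph

variable {G : SimpleGraph V} {A : Type*} [AddCommGroup A] {f : G.Dart → A}

theorem exists_potential_of_sum_map_darts_eq_zero (hf : ∀ d, f d.symm = -f d)
    (h : ∀ (u : V) (p : G.Walk u u), (p.darts.map f).sum = 0) :
    ∃ φ : V → A, ∀ d : G.Dart, f d = φ d.snd - φ d.fst := by
  have hroot (x : V) : G.Reachable (G.connectedComponentMk x).out x :=
    ConnectedComponent.exact (Quot.out_eq _)
  refine ⟨fun x => ((hroot x).some.darts.map f).sum, fun ⟨(a, b), hab⟩ => ?_⟩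
  have hr : (G.connectedComponentMk b).out = (G.connectedComponentMk a).out := by
    rw [ConnectedComponent.sound hab.reachable]
  have := h _ ((hroot a).some.append (.cons hab ((hroot b).some.copy hr rfl).reverse))
  simp only [Walk.darts_append, Walk.darts_cons, Walk.sum_map_darts_reverse hf,
    Walk.darts_copy, List.map_append, List.map_cons, List.sum_append, List.sum_cons] at this
  rw [← sub_eq_zero, ← this]
  abel

end SimpleGraph

theorem Relation.TransGen.eq_or_transGen_of_sink {α : Type*} {r s : α → α → Prop} {v : α}
    (hv : ∀ b, ¬ r v b) (hrs : ∀ a b, r a b → b = v ∨ s a b) {a b : α} (h : TransGen r a b) :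
    b = v ∨ TransGen s a b := by
  induction h with
  | single hab => exact (hrs _ _ hab).imp_right .single
  | tail _ hcb ih =>
    rcases ih with rfl | ih
    · exact absurd hcb (hv _)
    · exact (hrs _ _ hcb).imp_right ih.tail

namespace AcyclicOrientation

variable {G : SimpleGraph V}

theorem dir_asymm (O : AcyclicOrientation G) {a b : V} (h : O.dir a b) : ¬ O.dir b a :=
  fun h' => O.acyclic a (.tail (.single h) h')

theorem ext {O₁ O₂ : AcyclicOrientation G} (h : ∀ a b, O₁.dir a b ↔ O₂.dir a b) : O₁ = O₂ := by
  obtain ⟨d₁, _, _, _⟩ := O₁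
  obtain ⟨d₂, _, _, _⟩ := O₂
  obtain rfl : d₁ = d₂ := funext₂ fun a b => propext (h a b)
  rfl

theorem exists_isSource_mem [Finite V] (O : AcyclicOrientation G) {S : Set V} (hS : S.Nonempty)
    (hdown : ∀ ⦃a b⦄, O.dir a b → b ∈ S → a ∈ S) : ∃ v ∈ S, O.IsSource v := by
  have : IsTrans V (Relation.TransGen O.dir) := ⟨fun _ _ _ => .trans⟩
  have : Std.Irrefl (Relation.TransGen O.dir) := ⟨O.acyclic⟩
  have hwf : WellFounded O.dir :=
    Subrelation.wf Relation.TransGen.single (Finite.wellFounded_of_trans_of_irrefl _)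
  obtain ⟨v, hvS, hmin⟩ := hwf.has_min S hS
  exact ⟨v, hvS, fun a hav => hmin a (hdown hav hvS) hav⟩

def click (O : AcyclicOrientation G) (v : V) (hv : O.IsSource v) : AcyclicOrientation G where
  dir a b := ((a = v ∨ b = v) ∧ O.dir b a) ∨ (a ≠ v ∧ b ≠ v ∧ O.dir a b)
  dir_adj := by
    rintro a b (⟨_, h⟩ | ⟨_, _, h⟩)
    exacts [(O.dir_adj h).symm, O.dir_adj h]
  total := by
    intro a b hab
    have := hv a
    have := hv b
    rcases O.total hab with h | h <;> by_cases ha : a = v <;> by_cases hb : b = v <;>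
      simp_all
  acyclic := by
    intro a ha
    have hsink : ∀ b, ¬ (((v = v ∨ b = v) ∧ O.dir b v) ∨ (v ≠ v ∧ b ≠ v ∧ O.dir v b)) := by
      rintro b (⟨_, h⟩ | ⟨h, _⟩)
      exacts [hv b h, h rfl]
    have hdir : ∀ a b, ((a = v ∨ b = v) ∧ O.dir b a) ∨ (a ≠ v ∧ b ≠ v ∧ O.dir a b) →
        b = v ∨ O.dir a b := by
      rintro a b (⟨ha | hb, h⟩ | ⟨_, _, h⟩)
      exacts [absurd (ha ▸ h) (hv b), .inl hb, .inr h]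
    rcases ha.eq_or_transGen_of_sink hsink hdir with rfl | h
    · obtain ⟨b, hb, -⟩ := Relation.TransGen.head'_iff.1 ha
      exact hsink b hb
    · exact O.acyclic a h

theorem clickAt_click (O : AcyclicOrientation G) (v : V) (hv : O.IsSource v) :
    O.ClickAt v (O.click v hv) :=
  ⟨hv, fun _ _ => Iff.rfl⟩

open scoped Classical in
noncomputable def reversal (O₁ O₂ : AcyclicOrientation G) (d : G.Dart) : ℤ :=
  (if O₁.dir d.fst d.snd ∧ O₂.dir d.snd d.fst then 1 else 0) -
    (if O₁.dir d.snd d.fst ∧ O₂.dir d.fst d.snd then 1 else 0)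

theorem reversal_symm (O₁ O₂ : AcyclicOrientation G) (d : G.Dart) :
    reversal O₁ O₂ d.symm = -reversal O₁ O₂ d :=
  (neg_sub _ _).symm

open scoped Classical in
theorem two_mul_reversal (O₁ O₂ : AcyclicOrientation G) (d : G.Dart) :
    2 * reversal O₁ O₂ d =
      (if O₁.dir d.fst d.snd then 1 else -1) - (if O₂.dir d.fst d.snd then 1 else -1) := by
  rcases O₁.total d.adj with h₁ | h₁ <;> rcases O₂.total d.adj with h₂ | h₂ <;>
    simp [reversal, h₁, h₂, O₁.dir_asymm h₁, O₂.dir_asymm h₂]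

theorem two_mul_sum_reversal (O₁ O₂ : AcyclicOrientation G) {u : V} (p : G.Walk u u) :
    2 * (p.darts.map (reversal O₁ O₂)).sum = nu O₁ p - nu O₂ p := by
  unfold nu
  induction p.darts with
  | nil => rfl
  | cons d l ih =>
    simp only [List.map_cons, List.sum_cons, mul_add, ih, two_mul_reversal]
    ring

open scoped Classical in
def IsReversalPotential (O₁ O₂ : AcyclicOrientation G) (φ : V → ℤ) : Prop :=
  ∀ ⦃a b⦄, O₁.dir a b → φ b = φ a + if O₂.dir a b then 0 else 1

variable {O₁ O₂ : AcyclicOrientation G} {φ : V → ℤ}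

theorem isReversalPotential_of_reversal_eq (h : ∀ d, reversal O₁ O₂ d = φ d.snd - φ d.fst) :
    IsReversalPotential O₁ O₂ φ := by
  intro a b hab
  have := h ⟨(a, b), O₁.dir_adj hab⟩
  rcases O₂.total (O₁.dir_adj hab) with h₂ | h₂ <;>
    simp_all [reversal, O₁.dir_asymm hab, O₂.dir_asymm h₂]

namespace IsReversalPotential

theorem le (hφ : IsReversalPotential O₁ O₂ φ) {a b : V} (hab : O₁.dir a b) : φ a ≤ φ b := by
  rw [hφ hab]
  split_ifs <;> omega

theorem eq_of_const (hφ : IsReversalPotential O₁ O₂ φ) {c : ℤ} (hc : ∀ x, φ x = c) :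
    O₁ = O₂ := by
  have h₁₂ : ∀ a b, O₁.dir a b → O₂.dir a b := by
    intro a b hab
    have := hφ hab
    split_ifs at this with h <;> first | exact h | simp only [hc] at this; omega
  refine ext fun a b => ⟨h₁₂ a b, fun hab => ?_⟩
  exact (O₁.total (O₂.dir_adj hab)).resolve_right fun hba => O₂.dir_asymm hab (h₁₂ b a hba)

theorem click [DecidableEq V] (hφ : IsReversalPotential O₁ O₂ φ) {v : V} (hv : O₁.IsSource v) :
    IsReversalPotential (O₁.click v hv) O₂ (Function.update φ v (φ v + 1)) := by
  rintro a b (⟨rfl | rfl, hba⟩ | ⟨ha, hb, hab⟩)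
  · exact absurd hba (hv b)
  · have hav : a ≠ b := (O₁.dir_adj hba).ne.symm
    have := hφ hba
    rw [Function.update_self, Function.update_of_ne hav]
    rcases O₂.total (O₁.dir_adj hba) with h₂ | h₂ <;>
      simp only [h₂, O₂.dir_asymm h₂, if_true, if_false] at this ⊢ <;> omega
  · simpa [Function.update_of_ne ha, Function.update_of_ne hb] using hφ hab

end IsReversalPotential

theorem clickEquiv_of_isReversalPotential [Finite V] (hφ : IsReversalPotential O₁ O₂ φ) :
    ClickEquiv O₁ O₂ := by
  classical
  have := Fintype.ofFinite V
  obtain ⟨M, hM⟩ := (Set.finite_range φ).bddAbove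
  replace hM : ∀ x, φ x ≤ M := fun x => hM ⟨x, rfl⟩
  induction hn : ∑ x, (M - φ x).toNat using Nat.strong_induction_on generalizing O₁ φ with
  | _ n ih =>
  by_cases htop : ∀ x, φ x = M
  · rw [hφ.eq_of_const htop]
    exact .refl
  push Not at htop
  obtain ⟨x, hx⟩ := htop
  obtain ⟨v, hvM : φ v < M, hv⟩ := O₁.exists_isSource_mem (S := {y | φ y < M})
    ⟨x, lt_of_le_of_ne (hM x) hx⟩ fun a b hab hb => (hφ.le hab).trans_lt hb
  have hle : ∀ y, Function.update φ v (φ v + 1) y ≤ M := by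
    intro y
    rcases eq_or_ne y v with rfl | hy
    · rw [Function.update_self]
      omega
    · rw [Function.update_of_ne hy]
      exact hM y
  refine .head ⟨v, O₁.clickAt_click v hv⟩ (ih _ ?_ (hφ.click hv) hle rfl)
  rw [← hn]
  refine Finset.sum_lt_sum (fun y _ => ?_) ⟨v, Finset.mem_univ v, ?_⟩
  · rcases eq_or_ne y v with rfl | hy
    · rw [Function.update_self]
      omega
    · rw [Function.update_of_ne hy]
  · rw [Function.update_self]
    omega

end AcyclicOrientation

/-- `(ν_C)_C` over all cycles is a complete invariant: equal `ν`-values on every cycle imply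
click-equivalence. -/
theorem clickEquiv_of_nu_eq [Fintype V] (G : SimpleGraph V)
    (O₁ O₂ : AcyclicOrientation G)
    (h : ∀ (u : V) (p : G.Walk u u), p.IsCycle → nu O₁ p = nu O₂ p) :
    ClickEquiv O₁ O₂ := by
  have hcyc : ∀ (u : V) (c : G.Walk u u), c.IsCycle → (c.darts.map (reversal O₁ O₂)).sum = 0 := by
    intro u c hc
    have := two_mul_sum_reversal O₁ O₂ c
    rw [h u c hc, sub_self] at this
    omega
  obtain ⟨φ, hφ⟩ := SimpleGraph.exists_potential_of_sum_map_darts_eq_zero (reversal_symm O₁ O₂)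
    fun _ => SimpleGraph.Walk.sum_map_darts_eq_zero_of_forall_isCycle (reversal_symm O₁ O₂) hcyc
  exact clickEquiv_of_isReversalPotential (isReversalPotential_of_reversal_eq hφ)
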